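/- arXiv:2407.19771 — 2 statements merged into one kernel-verified Lean document; each statement's English description precedes it below -/
import Mathlib

section
/- Let G be a finite group and let S1 and S2 be two distinct cyclic subgroups of G, with generator sets T_{S1} = {x ∈ G : ⟨x⟩ = S1} and T_{S2} = {x ∈ G : ⟨x⟩ = S2}. If some element of T_{S1} is adjacent in the power graph P(G) to some element of T_{S2}, then every element of T_{S1} is adjacent in P(G) to every element of T_{S2}. -/
/-- The power graph of a group `G`: distinct vertices `x` and `y` are adjacent iff
one is an (integral) power of the other, i.e. `x ∈ ⟨y⟩` or `y ∈ ⟨x⟩`. -/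
def powerGraph (G : Type*) [Group G] : SimpleGraph G where
  Adj x y := x ≠ y ∧ (x ∈ Subgroup.zpowers y ∨ y ∈ Subgroup.zpowers x)
  symm := by
    constructor
    intro x y h
    exact ⟨h.1.symm, h.2.symm⟩
  loopless := by
    constructor
    intro x h
    exact h.1 rfl

theorem powerGraph_adj_iff {G : Type*} [Group G] {x y : G} :
    (powerGraph G).Adj x y ↔
      x ≠ y ∧ (Subgroup.zpowers x ≤ Subgroup.zpowers y ∨
        Subgroup.zpowers y ≤ Subgroup.zpowers x) := by
  simp only [powerGraph, Subgroup.zpowers_le]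

theorem powerGraph_adj_iff_of_zpowers_ne {G : Type*} [Group G] {x y : G}
    (hne : Subgroup.zpowers x ≠ Subgroup.zpowers y) :
    (powerGraph G).Adj x y ↔
      Subgroup.zpowers x ≤ Subgroup.zpowers y ∨ Subgroup.zpowers y ≤ Subgroup.zpowers x := by
  rw [powerGraph_adj_iff, and_iff_right]
  rintro rfl
  exact hne rfl

theorem power_graph_generator_sets_adjacency_general {G : Type*} [Group G]
    (S1 S2 : Subgroup G) (hne : S1 ≠ S2)
    (h : ∃ x y : G, Subgroup.zpowers x = S1 ∧ Subgroup.zpowers y = S2 ∧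
      (powerGraph G).Adj x y) :
    ∀ x y : G, Subgroup.zpowers x = S1 → Subgroup.zpowers y = S2 →
      (powerGraph G).Adj x y := by
  obtain ⟨x₀, y₀, rfl, rfl, hadj⟩ := h
  intro x y hx hy
  rw [powerGraph_adj_iff_of_zpowers_ne hne] at hadj
  rw [powerGraph_adj_iff_of_zpowers_ne (hx ▸ hy ▸ hne), hx, hy]
  exact hadj

/-- If some element of the generator set of a cyclic subgroup `S1` is adjacent in the
power graph to some element of the generator set of a distinct cyclic subgroup `S2`,
then every element of the generator set of `S1` is adjacent to every element of the
generator set of `S2`. -/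
theorem power_graph_generator_sets_adjacency {G : Type*} [Group G] [Finite G]
    (S1 S2 : Subgroup G) (hS1 : IsCyclic S1) (hS2 : IsCyclic S2) (hne : S1 ≠ S2)
    (h : ∃ x y : G, Subgroup.zpowers x = S1 ∧ Subgroup.zpowers y = S2 ∧
      (powerGraph G).Adj x y) :
    ∀ x y : G, Subgroup.zpowers x = S1 → Subgroup.zpowers y = S2 →
      (powerGraph G).Adj x y :=
  power_graph_generator_sets_adjacency_general S1 S2 hne h
end

section
/- Let m and n be positive integers with m dividing n, and let G = Z_m × Z_n. Then (X + 1)^α divides the characteristic polynomial of the adjacency matrix of the power graph P(G), where α = Σ_{d ∣ n} c_d·(φ(d) − 1) and c_d denotes the number of cyclic subgroups of G of order d. -/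
open Polynomial

/-- The power graph of an additive group `G`: distinct vertices `x` and `y` are adjacent
iff one is an (integral) multiple of the other, i.e. `x ∈ ⟨y⟩` or `y ∈ ⟨x⟩`. -/
def addPowerGraph (G : Type*) [AddGroup G] : SimpleGraph G where
  Adj x y := x ≠ y ∧ (x ∈ AddSubgroup.zmultiples y ∨ y ∈ AddSubgroup.zmultiples x)
  symm := by
    refine ⟨fun x y h => ?_⟩
    exact ⟨h.1.symm, h.2.symm⟩
  loopless := by
    refine ⟨fun x h => ?_⟩
    exact h.1 rfl

open Classical in
/-- The adjacency matrix (over `ℤ`) of a finite simple graph. -/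
noncomputable def adjMat {V : Type*} [Fintype V] (G : SimpleGraph V) : Matrix V V ℤ :=
  fun i j => if G.Adj i j then 1 else 0

/-- The number of cyclic subgroups of order `d` of an additive group `G`. -/
noncomputable def numCyclicSubgroups (G : Type*) [AddGroup G] (d : ℕ) : ℕ :=
  Nat.card {H : AddSubgroup G // IsAddCyclic H ∧ Nat.card H = d}

/-!
If `x ≠ y` generate the same cyclic subgroup, they are closed twins in the power graph, since
the closed neighbourhood `N[x] = {z | ⟨x⟩ ≤ ⟨z⟩ ∨ ⟨z⟩ ≤ ⟨x⟩}` depends only on `⟨x⟩`. Hence rows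
`x` and `y` of `A + I` agree, and rows `x` and `y` of `X • I - A` differ by `(X + 1) (e_x - e_y)`.
Fix one generator of every cyclic subgroup and subtract its row from the rows of all other
generators: each of these rows becomes divisible by `X + 1`, so `(X + 1) ^ k` divides the
characteristic polynomial, where `k = Σ_H (φ |H| - 1)` over all cyclic subgroups `H`.
The exponent `α` is the part of this sum over the subgroups of order dividing `n`, so `α ≤ k`.
-/

namespace Matrix

variable {V R : Type*} [Fintype V] [DecidableEq V] [CommRing R]

theorem pow_card_dvd_det_of_dvd_sub_row (M : Matrix V V R) (c : R) (S : Finset V)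
    (r : V → V) (hr : ∀ u ∈ S, r u ∉ S)
    (hdvd : ∀ u ∈ S, ∀ j, c ∣ M u j - M (r u) j) : c ^ S.card ∣ M.det := by
  induction S using Finset.induction_on generalizing M with
  | empty => simp
  | insert u S hu ih =>
    have hu' : u ∈ insert u S := Finset.mem_insert_self u S
    have hru : r u ≠ u := fun h => hr u hu' (by rwa [h])
    choose v hv using hdvd u hu'
    have hdet : M.det = c * (M.updateRow u v).det := by
      rw [← det_updateRow_add_smul_self M hru.symm (-1), ← det_updateRow_smul]
      congr 2
      ext j
      simp [← hv j, sub_eq_add_neg]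
    rw [Finset.card_insert_of_notMem hu, pow_succ', hdet]
    refine mul_dvd_mul_left c (ih _ (fun w hw => ?_) fun w hw j => ?_)
    · exact fun h => hr w (Finset.mem_insert_of_mem hw) (Finset.mem_insert_of_mem h)
    · have hwu : w ≠ u := fun h => hu (h ▸ hw)
      have hrwu : r w ≠ u := fun h => hr w (Finset.mem_insert_of_mem hw) (h ▸ hu')
      rw [updateRow_ne hwu, updateRow_ne hrwu]
      exact hdvd w (Finset.mem_insert_of_mem hw) j

theorem X_add_one_dvd_charmatrix_sub_charmatrix (M : Matrix V V R) {x y : V}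
    (h : (M + 1) x = (M + 1) y) (j : V) : X + 1 ∣ M.charmatrix x j - M.charmatrix y j := by
  have hj := congrFun h j
  simp only [add_apply, one_apply] at hj
  refine ⟨(if x = j then 1 else 0) - (if y = j then 1 else 0), ?_⟩
  have hx : M x j = M y j + (if y = j then 1 else 0) - (if x = j then 1 else 0) := by
    linear_combination hj
  rw [charmatrix_apply, charmatrix_apply, hx]
  split_ifs <;> simp [*] <;> ring

end Matrix

namespace SimpleGraph

variable {V : Type*}

def IsClosedTwin (G : SimpleGraph V) (x y : V) : Prop :=
  insert x (G.neighborSet x) = insert y (G.neighborSet y)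

variable [Fintype V] [DecidableEq V] {G : SimpleGraph V}

theorem adjMat_add_one_apply (x y : V) :
    (adjMat G + 1) x y = (insert x (G.neighborSet x)).indicator 1 y := by
  classical
  by_cases hxy : x = y
  · subst hxy
    simp [adjMat]
  · simp [adjMat, Set.indicator_apply, hxy, Ne.symm hxy]

theorem IsClosedTwin.adjMat_add_one_row_eq {x y : V} (h : G.IsClosedTwin x y) :
    (adjMat G + 1) x = (adjMat G + 1) y :=
  funext fun j => by rw [adjMat_add_one_apply, adjMat_add_one_apply, h]

theorem X_add_one_pow_dvd_charpoly_adjMat (S : Finset V) (r : V → V)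
    (hr : ∀ u ∈ S, r u ∉ S) (htwin : ∀ u ∈ S, G.IsClosedTwin u (r u)) :
    (X + 1) ^ S.card ∣ (adjMat G).charpoly :=
  Matrix.pow_card_dvd_det_of_dvd_sub_row _ _ S r hr fun u hu =>
    Matrix.X_add_one_dvd_charmatrix_sub_charmatrix _ (htwin u hu).adjMat_add_one_row_eq

end SimpleGraph

section AddPowerGraph

open AddSubgroup Finset

variable {G : Type*} [AddGroup G]

theorem insert_neighborSet_addPowerGraph (x : G) :
    insert x ((addPowerGraph G).neighborSet x) =
      {z | zmultiples x ≤ zmultiples z ∨ z ∈ zmultiples x} := by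
  ext z
  by_cases hzx : z = x
  · subst hzx
    simp [mem_zmultiples]
  · simp [addPowerGraph, hzx, Ne.symm hzx, zmultiples_le]

theorem isClosedTwin_addPowerGraph_of_zmultiples_eq {x y : G}
    (h : zmultiples x = zmultiples y) : (addPowerGraph G).IsClosedTwin x y := by
  rw [SimpleGraph.IsClosedTwin, insert_neighborSet_addPowerGraph,
    insert_neighborSet_addPowerGraph, h]

noncomputable def canonicalGenerator (x : G) : G :=
  Classical.epsilon fun g => zmultiples g = zmultiples x

theorem zmultiples_canonicalGenerator (x : G) :
    zmultiples (canonicalGenerator x) = zmultiples x :=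
  Classical.epsilon_spec (p := fun g => zmultiples g = zmultiples x) ⟨x, rfl⟩

theorem canonicalGenerator_eq_of_zmultiples_eq {x y : G} (h : zmultiples x = zmultiples y) :
    canonicalGenerator x = canonicalGenerator y := by
  rw [canonicalGenerator, canonicalGenerator, h]

theorem canonicalGenerator_canonicalGenerator (x : G) :
    canonicalGenerator (canonicalGenerator x) = canonicalGenerator x :=
  canonicalGenerator_eq_of_zmultiples_eq (zmultiples_canonicalGenerator x)

theorem zmultiples_eq_zmultiples_iff_of_mem [Finite G] {x y : G} (hx : x ∈ zmultiples y) :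
    zmultiples x = zmultiples y ↔ addOrderOf x = addOrderOf y := by
  refine ⟨fun h => ?_, fun h => eq_of_le_of_card_ge (zmultiples_le.mpr hx) ?_⟩
  · rw [← Nat.card_zmultiples, h, Nat.card_zmultiples]
  · rw [Nat.card_zmultiples, Nat.card_zmultiples, h]

theorem card_generators_zmultiples [Finite G] (y : G) :
    Nat.card {x : G // zmultiples x = zmultiples y} = (addOrderOf y).totient := by
  have := Fintype.ofFinite G
  have e : {a : zmultiples y // addOrderOf a = addOrderOf y} ≃
      {x : G // zmultiples x = zmultiples y} :=
    (Equiv.subtypeEquivRight fun a => by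
      rw [← addOrderOf_coe, zmultiples_eq_zmultiples_iff_of_mem a.2]).trans
      (Equiv.subtypeSubtypeEquivSubtype fun h => h ▸ mem_zmultiples _)
  rw [← Nat.card_congr e, Nat.card_eq_fintype_card, Fintype.card_subtype,
    IsAddCyclic.card_addOrderOf_eq_totient
      (by rw [← Nat.card_eq_fintype_card, Nat.card_zmultiples])]

variable [Fintype G] [DecidableEq G]

theorem card_canonicalGenerator_ne :
    #{x : G | canonicalGenerator x ≠ x} =
      ∑ y : G with canonicalGenerator y = y, ((addOrderOf y).totient - 1) := by
  classical
  rw [card_eq_sum_card_fiberwise (f := canonicalGenerator)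
    (t := ({y | canonicalGenerator y = y} : Finset G))
    fun x _ => by simp [canonicalGenerator_canonicalGenerator]]
  refine sum_congr rfl fun y hy => ?_
  have hy : canonicalGenerator y = y := (mem_filter.mp hy).2
  have hfiber :
      ({x ∈ {x : G | canonicalGenerator x ≠ x} | canonicalGenerator x = y} : Finset G) =
        ({x | zmultiples x = zmultiples y} : Finset G).erase y := by
    ext x
    simp only [mem_filter, mem_univ, true_and, mem_erase]
    constructor
    · rintro ⟨hx, rfl⟩
      exact ⟨Ne.symm hx, (zmultiples_canonicalGenerator x).symm⟩
    · rintro ⟨hxy, hx⟩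
      rw [canonicalGenerator_eq_of_zmultiples_eq hx, hy]
      exact ⟨Ne.symm hxy, rfl⟩
  rw [hfiber, card_erase_of_mem (by simp), ← Fintype.card_subtype,
    ← Nat.card_eq_fintype_card, card_generators_zmultiples]

theorem numCyclicSubgroups_eq_card (d : ℕ) :
    numCyclicSubgroups G d = #{y : G | canonicalGenerator y = y ∧ addOrderOf y = d} := by
  rw [numCyclicSubgroups, ← Fintype.card_subtype, ← Nat.card_eq_fintype_card]
  refine (Nat.card_congr (Equiv.ofBijective
    (fun y => ⟨zmultiples y.1, inferInstance, by rw [Nat.card_zmultiples, y.2.2]⟩) ⟨?_, ?_⟩)).symm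
  · rintro ⟨x, hx, _⟩ ⟨y, hy, _⟩ hxy
    have hzm : zmultiples x = zmultiples y := congrArg Subtype.val hxy
    rw [Subtype.mk.injEq, ← hx, ← hy, canonicalGenerator_eq_of_zmultiples_eq hzm]
  · rintro ⟨H, hH, hd⟩
    obtain ⟨g, rfl⟩ := (AddSubgroup.isAddCyclic_iff_exists_zmultiples_eq_top H).mp hH
    refine ⟨⟨canonicalGenerator g, canonicalGenerator_canonicalGenerator g, ?_⟩, ?_⟩
    · rw [← Nat.card_zmultiples, zmultiples_canonicalGenerator, hd]
    · exact Subtype.ext (zmultiples_canonicalGenerator g)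

theorem sum_numCyclicSubgroups_mul_totient_sub_one_le (D : Finset ℕ) :
    ∑ d ∈ D, numCyclicSubgroups G d * (d.totient - 1) ≤
      #{x : G | canonicalGenerator x ≠ x} := by
  set R : Finset G := {y | canonicalGenerator y = y}
  calc ∑ d ∈ D, numCyclicSubgroups G d * (d.totient - 1)
      = ∑ d ∈ D, ∑ y ∈ R with addOrderOf y = d, ((addOrderOf y).totient - 1) := by
        refine sum_congr rfl fun d _ => ?_
        rw [numCyclicSubgroups_eq_card, filter_filter, sum_congr rfl fun y hy => by
          rw [(mem_filter.mp hy).2.2], sum_const, smul_eq_mul]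
    _ = ∑ y ∈ R with addOrderOf y ∈ D, ((addOrderOf y).totient - 1) :=
        sum_fiberwise_eq_sum_filter _ _ _ _
    _ ≤ ∑ y ∈ R, ((addOrderOf y).totient - 1) := sum_le_sum_of_subset (filter_subset _ _)
    _ = #{x : G | canonicalGenerator x ≠ x} := card_canonicalGenerator_ne.symm

theorem X_add_one_pow_dvd_charpoly_addPowerGraph (D : Finset ℕ) :
    (X + 1) ^ (∑ d ∈ D, numCyclicSubgroups G d * (d.totient - 1)) ∣
      (adjMat (addPowerGraph G)).charpoly :=
  (pow_dvd_pow _ (sum_numCyclicSubgroups_mul_totient_sub_one_le D)).trans <|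
    SimpleGraph.X_add_one_pow_dvd_charpoly_adjMat _ canonicalGenerator
      (fun _ _ => by simp [canonicalGenerator_canonicalGenerator])
      fun u _ =>
        isClosedTwin_addPowerGraph_of_zmultiples_eq (zmultiples_canonicalGenerator u).symm

end AddPowerGraph

theorem charpoly_power_graph_dvd_general (m n : ℕ) [NeZero m] [NeZero n] :
    ((X : Polynomial ℤ) + 1) ^
        (∑ d ∈ n.divisors, numCyclicSubgroups (ZMod m × ZMod n) d * (Nat.totient d - 1)) ∣
      Matrix.charpoly (adjMat (addPowerGraph (ZMod m × ZMod n))) :=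
  X_add_one_pow_dvd_charpoly_addPowerGraph _

/-- If `m ∣ n`, then `(X + 1) ^ α` divides the characteristic polynomial of the
adjacency matrix of the power graph of `Z_m × Z_n`, where
`α = Σ_{d ∣ n} c_d (φ(d) - 1)` with `c_d` the number of cyclic subgroups of order `d`. -/
theorem charpoly_power_graph_dvd (m n : ℕ) [NeZero m] [NeZero n] (hmn : m ∣ n) :
    ((X : Polynomial ℤ) + 1) ^
        (∑ d ∈ n.divisors, numCyclicSubgroups (ZMod m × ZMod n) d * (Nat.totient d - 1)) ∣
      Matrix.charpoly (adjMat (addPowerGraph (ZMod m × ZMod n))) :=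
  charpoly_power_graph_dvd_general m n
end
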